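/- Let x̄ ∈ S₀ := {x : (f⊕φ)(x) = f(x)}. Suppose φ is coercive with constant m > 0, subadditive, continuous at 0 with φ(0)=0, and f is lower semicontinuous on X and Lipschitz continuous on dom f with constant ℓ, 0 ≤ ℓ < m. Then the limiting (Mordukhovich) subdifferential satisfies ∂(f⊕φ)(x̄) ⊂ ∂f(x̄) ∩ [−∂φ(0)]. -/

import Mathlib

/-!
Since `ℓ < m ≤ φ / ‖·‖`, the Lipschitz bound gives `f u ≤ f w + φ (w - u)` on `dom f`, so
`g = f ⊕ φ` agrees with `f` there; subadditivity makes `φ` and `g` continuous and, with lower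
semicontinuity of `f`, `dom f` closed. Let `q` be an `ε`-Fréchet subgradient of `g` at `x` and
`u` a near-minimiser of `w ↦ f w + φ (w - x)`. Perturbing only the first or only the second
argument of the pair `(u, u - x)` shows that `q` is an approximate subgradient of `f` at `u` and
`-q` one of `φ` at `u - x`; Ekeland's variational principle turns these into genuine Fréchet
subgradients at nearby points `v` and `z`. Along a sequence `x k → x0`, coercivity and the
Lipschitz bound force `u k - x k → 0`, hence `v k → x0` and `z k → 0`.
-/

open Filter Topology Set Bornology

variable {X : Type*} [NormedAddCommGroup X] [NormedSpace ℝ X]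

/-- Infimal convolution of an extended-real-valued `f` with a real-valued `φ`. -/
noncomputable def infConv (f : X → EReal) (φ : X → ℝ) (x : X) : EReal :=
  ⨅ w, f w + ((φ (w - x) : ℝ) : EReal)

/-- ε-Fréchet subdifferential of a real-valued function. -/
def frechetSubdiff (g : X → ℝ) (ε : ℝ) (x0 : X) : Set (X →L[ℝ] ℝ) :=
  {p | ∀ η : ℝ, 0 < η → ∀ᶠ x in 𝓝 x0, p (x - x0) ≤ g x - g x0 + (ε + η) * ‖x - x0‖}

/-- ε-Fréchet subdifferential of an extended-real-valued function. -/
def frechetSubdiffE (f : X → EReal) (ε : ℝ) (x0 : X) : Set (X →L[ℝ] ℝ) :=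
  {p | ∀ η : ℝ, 0 < η → ∀ᶠ x in 𝓝 x0,
    ((p (x - x0) : ℝ) : EReal) ≤ f x - f x0 + (((ε + η) * ‖x - x0‖ : ℝ) : EReal)}

/-- Limiting (Mordukhovich) subdifferential of a real-valued function. -/
def limitingSubdiff (g : X → ℝ) (x0 : X) : Set (X →L[ℝ] ℝ) :=
  {p | ∃ (x : ℕ → X) (ε : ℕ → ℝ) (q : ℕ → X →L[ℝ] ℝ),
    (∀ k, 0 ≤ ε k) ∧ Tendsto ε atTop (𝓝 0) ∧
    Tendsto x atTop (𝓝 x0) ∧ Tendsto (fun k => g (x k)) atTop (𝓝 (g x0)) ∧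
    (∀ k, q k ∈ frechetSubdiff g (ε k) (x k)) ∧
    (∀ v : X, Tendsto (fun k => (q k) v) atTop (𝓝 (p v)))}

/-- Limiting (Mordukhovich) subdifferential of an extended-real-valued function. -/
def limitingSubdiffE (f : X → EReal) (x0 : X) : Set (X →L[ℝ] ℝ) :=
  {p | ∃ (x : ℕ → X) (ε : ℕ → ℝ) (q : ℕ → X →L[ℝ] ℝ),
    (∀ k, 0 ≤ ε k) ∧ Tendsto ε atTop (𝓝 0) ∧
    Tendsto x atTop (𝓝 x0) ∧ Tendsto (fun k => f (x k)) atTop (𝓝 (f x0)) ∧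
    (∀ k, q k ∈ frechetSubdiffE f (ε k) (x k)) ∧
    (∀ v : X, Tendsto (fun k => (q k) v) atTop (𝓝 (p v)))}

/-- Fréchet strict differentiability of an extended-real-valued function. -/
def FrechetStrictDiffAtE (f : X → EReal) (x0 : X) : Prop :=
  ∃ v : X →L[ℝ] ℝ, ∀ ε : ℝ, 0 < ε → ∃ δ > (0 : ℝ), ∀ x y : X,
    ‖x - x0‖ < δ → ‖y - x0‖ < δ →
      f x - f y - ((v (x - y) : ℝ) : EReal) ≤ ((ε * ‖x - y‖ : ℝ) : EReal) ∧
      ((-(ε * ‖x - y‖) : ℝ) : EReal) ≤ f x - f y - ((v (x - y) : ℝ) : EReal)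

/-- Local Lipschitz continuity of an extended-real-valued function around a point. -/
def LocallyLipschitzAtE (f : X → EReal) (x0 : X) : Prop :=
  ∃ ℓ : ℝ, 0 ≤ ℓ ∧ ∃ δ > (0 : ℝ), ∀ x y : X, ‖x - x0‖ < δ → ‖y - x0‖ < δ →
    f x - f y ≤ ((ℓ * ‖x - y‖ : ℝ) : EReal)

section Ekeland

variable {α : Type*} [PseudoMetricSpace α] {h : α → ℝ} {σ : ℝ}

def ekelandSet (h : α → ℝ) (σ : ℝ) (v : α) : Set α :=
  {w | h w + σ * dist w v ≤ h v}

theorem self_mem_ekelandSet (v : α) : v ∈ ekelandSet h σ v := by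
  simp [ekelandSet]

theorem ekelandSet_subset (hσ : 0 ≤ σ) {v w : α} (hw : w ∈ ekelandSet h σ v) :
    ekelandSet h σ w ⊆ ekelandSet h σ v := by
  intro y hy
  simp only [ekelandSet, mem_ofPred_eq] at hw hy ⊢
  nlinarith [dist_triangle y w v]

theorem LowerSemicontinuous.isClosed_ekelandSet (hh : LowerSemicontinuous h) (v : α) :
    IsClosed (ekelandSet h σ v) :=
  (hh.add (continuous_const.mul (continuous_id.dist continuous_const)).lowerSemicontinuous
    ).isClosed_preimage (h v)

theorem exists_mem_ekelandSet_forall_le_add (hbdd : BddBelow (range h)) (v : α) {ε : ℝ}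
    (hε : 0 < ε) : ∃ w ∈ ekelandSet h σ v, ∀ y ∈ ekelandSet h σ v, h w ≤ h y + ε := by
  have hne : (h '' ekelandSet h σ v).Nonempty := ⟨h v, v, self_mem_ekelandSet v, rfl⟩
  obtain ⟨_, ⟨w, hw, rfl⟩, hlt⟩ := exists_lt_of_csInf_lt hne (lt_add_of_pos_right _ hε)
  refine ⟨w, hw, fun y hy => ?_⟩
  linarith [csInf_le (hbdd.mono (image_subset_range _ _)) (mem_image_of_mem h hy)]

/-- Ekeland's variational principle. -/
theorem LowerSemicontinuous.exists_forall_le_add_dist [CompleteSpace α]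
    (hh : LowerSemicontinuous h) (hbdd : BddBelow (range h)) (hσ : 0 < σ) (u : α) :
    ∃ v ∈ ekelandSet h σ u, ∀ w, h v ≤ h w + σ * dist w v := by
  choose next hnext_mem hnext_le using fun (v : α) (n : ℕ) =>
    exists_mem_ekelandSet_forall_le_add (σ := σ) hbdd v (Nat.one_div_pos_of_nat (n := n))
  -- Each iterate nearly minimises `h` over the drop set of its predecessor; the drop sets are
  -- nested, so the iterates form a Cauchy sequence whose limit lies in all of them.
  let c : ℕ → α := fun n => Nat.rec u (fun n v => next v n) n
  have hc_mem : ∀ n m, n ≤ m → c m ∈ ekelandSet h σ (c n) := by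
    intro n m hnm
    induction m, hnm using Nat.le_induction with
    | base => exact self_mem_ekelandSet _
    | succ m _ ih => exact ekelandSet_subset hσ.le ih (hnext_mem (c m) m)
  have hc_dist : ∀ n m, n + 1 ≤ m → σ * dist (c m) (c (n + 1)) ≤ 1 / (n + 1) := by
    intro n m hnm
    have hm_mem : c m ∈ ekelandSet h σ (c (n + 1)) := hc_mem (n + 1) m hnm
    have hnear := hnext_le (c n) n (c m) (hc_mem n m (by omega))
    simp only [ekelandSet, mem_ofPred_eq] at hm_mem
    linarith
  have hcauchy : CauchySeq c := by
    refine Metric.cauchySeq_iff'.2 fun ε hε => ?_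
    obtain ⟨n, hn⟩ := exists_nat_one_div_lt (mul_pos hσ hε)
    exact ⟨n + 1, fun m hm => lt_of_mul_lt_mul_left ((hc_dist n m hm).trans_lt hn) hσ.le⟩
  obtain ⟨V, hV⟩ := cauchySeq_tendsto_of_complete hcauchy
  have hV_mem : ∀ n, V ∈ ekelandSet h σ (c n) := fun n =>
    (hh.isClosed_ekelandSet _).mem_of_tendsto hV (eventually_atTop.2 ⟨n, hc_mem n⟩)
  refine ⟨V, hV_mem 0, fun w => ?_⟩
  by_contra! hw
  have hw_mem : ∀ n, w ∈ ekelandSet h σ (c n) := fun n =>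
    ekelandSet_subset hσ.le (hV_mem n) (show h w + σ * dist w V ≤ h V by linarith)
  have hVw : h V ≤ h w := le_of_forall_pos_lt_add fun ε hε => by
    obtain ⟨n, hn⟩ := exists_nat_one_div_lt hε
    have hV_drop : h V + σ * dist V (c (n + 1)) ≤ h (c (n + 1)) := hV_mem (n + 1)
    have hnear := hnext_le (c n) n w (hw_mem n)
    nlinarith [dist_nonneg (x := V) (y := c (n + 1))]
  nlinarith [dist_nonneg (x := w) (y := V)]

theorem IsClosed.exists_forall_le_add_dist [CompleteSpace α] {s : Set α} (hs : IsClosed s)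
    (hh : LowerSemicontinuous h) (hbdd : BddBelow (h '' s)) (hσ : 0 < σ) {u : α} (hu : u ∈ s) :
    ∃ v ∈ s, v ∈ ekelandSet h σ u ∧ ∀ w ∈ s, h v ≤ h w + σ * dist w v := by
  have := hs.completeSpace_coe
  obtain ⟨v, hvu, hv⟩ := (hh.comp continuous_subtype_val).exists_forall_le_add_dist
    (by rwa [range_comp, Subtype.range_coe]) hσ ⟨u, hu⟩
  exact ⟨v, v.2, hvu, fun w hw => hv ⟨w, hw⟩⟩

theorem IsClosed.exists_forall_le_add_dist_of_le_add [CompleteSpace α] {s : Set α}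
    (hs : IsClosed s) {F : α → ℝ} (hF : LowerSemicontinuous F) {u : α} (hu : u ∈ s)
    {c ρ σ : ℝ} (hc : 0 ≤ c) (hσ : 0 < σ) (happrox : ∀ y ∈ s, F u ≤ F y + c * dist y u + ρ) :
    ∃ v ∈ s, σ * dist v u ≤ ρ ∧ ∀ w ∈ s, F v ≤ F w + (c + σ) * dist w v := by
  set h : α → ℝ := fun y => F y + c * dist y u
  have hh : LowerSemicontinuous h :=
    hF.add (continuous_const.mul (continuous_id.dist continuous_const)).lowerSemicontinuous
  have hbdd : BddBelow (h '' s) := ⟨F u - ρ, by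
    rintro _ ⟨y, hy, rfl⟩
    linarith [happrox y hy]⟩
  obtain ⟨v, hvs, hvu, hv⟩ := hs.exists_forall_le_add_dist hh hbdd hσ hu
  simp only [ekelandSet, mem_ofPred_eq, h, dist_self, mul_zero, add_zero] at hvu
  refine ⟨v, hvs, by linarith [happrox v hvs], fun w hw => ?_⟩
  have := hv w hw
  nlinarith [dist_triangle w v u]

end Ekeland

open Metric

theorem IsClosed.exists_eventually_le_of_le_add [CompleteSpace X] {s : Set X} (hs : IsClosed s)
    {G : X → ℝ} (hG : LowerSemicontinuous G) (q : X →L[ℝ] ℝ) {u : X} (hu : u ∈ s)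
    {c ρ σ R : ℝ} (hc : 0 ≤ c) (hσ : 0 < σ) (hρ : 0 ≤ ρ) (hρR : ρ < σ * R)
    (happrox : ∀ y ∈ s, ‖y - u‖ ≤ R → q (y - u) ≤ G y - G u + c * ‖y - u‖ + ρ) :
    ∃ v ∈ s, σ * ‖v - u‖ ≤ ρ ∧
      ∀ᶠ w in 𝓝 v, w ∈ s → q (w - v) ≤ G w - G v + (c + σ) * ‖w - v‖ := by
  have hR : 0 ≤ R := nonneg_of_mul_nonneg_right (hρ.trans hρR.le) hσ
  have hF : LowerSemicontinuous fun y => G y + -q y :=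
    hG.add (continuous_neg.comp q.continuous).lowerSemicontinuous
  obtain ⟨v, ⟨hvs, -⟩, hvu, hv⟩ :=
    (hs.inter isClosed_closedBall).exists_forall_le_add_dist_of_le_add hF
      ⟨hu, mem_closedBall_self hR⟩ hc hσ (ρ := ρ) fun y ⟨hys, hyu⟩ => by
      rw [mem_closedBall, dist_eq_norm] at hyu
      have := happrox y hys hyu
      rw [map_sub] at this
      rw [dist_eq_norm]
      linarith
  rw [dist_eq_norm] at hvu
  have hvR : ‖v - u‖ < R := lt_of_mul_lt_mul_left (hvu.trans_lt hρR) hσ.le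
  refine ⟨v, hvs, hvu, ?_⟩
  filter_upwards [ball_mem_nhds v (sub_pos.2 hvR)] with w hwv hws
  rw [mem_ball, dist_eq_norm] at hwv
  have hwR : ‖w - u‖ ≤ R := by
    linarith [norm_sub_le_norm_sub_add_norm_sub w v u]
  have := hv w ⟨hws, by rwa [mem_closedBall, dist_eq_norm]⟩
  rw [dist_eq_norm] at this
  rw [map_sub]
  linarith

theorem mem_frechetSubdiff_of_eventually_le {G : X → ℝ} {ε : ℝ} {v : X} {q : X →L[ℝ] ℝ}
    (h : ∀ᶠ w in 𝓝 v, q (w - v) ≤ G w - G v + ε * ‖w - v‖) : q ∈ frechetSubdiff G ε v :=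
  fun η hη => h.mono fun w hw => hw.trans (by gcongr; linarith)

theorem mem_frechetSubdiffE_of_eventually_le {f : X → EReal} {G : X → ℝ} {ε : ℝ} {v : X}
    {q : X →L[ℝ] ℝ} (hfG : ∀ w, f w ≠ ⊤ → f w = G w) (hv : f v ≠ ⊤)
    (h : ∀ᶠ w in 𝓝 v, f w ≠ ⊤ → q (w - v) ≤ G w - G v + ε * ‖w - v‖) :
    q ∈ frechetSubdiffE f ε v := by
  intro η hη
  filter_upwards [h] with w hw
  by_cases hwf : f w = ⊤
  · rw [hwf, hfG v hv, EReal.top_sub_coe, EReal.top_add_coe]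
    exact le_top
  · rw [hfG w hwf, hfG v hv]
    exact_mod_cast (hw hwf).trans (by gcongr; linarith)

theorem continuous_of_le_add_sub {G : Type*} [TopologicalSpace G] [AddGroup G]
    [IsTopologicalAddGroup G] {ψ ω : G → ℝ} (hω : Tendsto ω (𝓝 0) (𝓝 0))
    (h : ∀ a b, ψ a ≤ ψ b + ω (a - b)) : Continuous ψ := by
  refine continuous_iff_continuousAt.2 fun b => ?_
  have h1 : Tendsto (fun a => ω (a - b)) (𝓝 b) (𝓝 0) :=
    hω.comp (tendsto_sub_nhds_zero_iff.2 tendsto_id)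
  have h2 : Tendsto (fun a => ω (b - a)) (𝓝 b) (𝓝 0) :=
    hω.comp ((continuous_const.sub continuous_id).tendsto' b 0 (sub_self b))
  refine tendsto_of_tendsto_of_tendsto_of_le_of_le (by simpa using tendsto_const_nhds.sub h2)
    (by simpa using tendsto_const_nhds.add h1) (fun a => ?_) (fun a => h a b)
  linarith [h b a]

theorem LowerSemicontinuous.isClosed_setOf_ne_top {α : Type*} [TopologicalSpace α]
    {f : α → EReal} {g : α → ℝ} (hf : LowerSemicontinuous f) (hg : Continuous g)
    (hfg : ∀ x, f x ≠ ⊤ → f x = g x) : IsClosed {x | f x ≠ ⊤} := by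
  have : {x | f x ≠ ⊤} = (fun x => (x, (g x : EReal))) ⁻¹' {p | f p.1 ≤ p.2} := by
    ext x
    exact ⟨fun hx => (hfg x hx).le, fun hx => ne_top_of_le_ne_top (EReal.coe_ne_top _) hx⟩
  rw [this]
  exact hf.isClosed_epigraph.preimage (continuous_id.prodMk (continuous_coe_real_ereal.comp hg))

section InfConv

variable {E : Type*} [NormedAddCommGroup E] {f : E → EReal} {φ g : E → ℝ}

theorem infConv_le (x w : E) : infConv f φ x ≤ f w + φ (w - x) :=
  iInf_le _ w

theorem le_add_of_lipschitzOn_dom {ℓ : ℝ} (hfbot : ∀ x, f x ≠ ⊥)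
    (hLip : ∀ x y : E, f x ≠ ⊤ → f y ≠ ⊤ → |(f x).toReal - (f y).toReal| ≤ ℓ * ‖x - y‖)
    (hφ : ∀ x, ℓ * ‖x‖ ≤ φ x) {u : E} (hu : f u ≠ ⊤) (w : E) : f u ≤ f w + φ (w - u) := by
  by_cases hw : f w = ⊤
  · rw [hw, EReal.top_add_coe]
    exact le_top
  have hLuw := (abs_le.1 (hLip u w hu hw)).2
  rw [norm_sub_rev] at hLuw
  rw [← EReal.coe_toReal hu (hfbot u), ← EReal.coe_toReal hw (hfbot w)]
  exact_mod_cast (by linarith [hφ (w - u)] : (f u).toReal ≤ (f w).toReal + φ (w - u))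

theorem infConv_eq_self_of_lipschitzOn_dom {ℓ : ℝ} (hφ0 : φ 0 = 0) (hfbot : ∀ x, f x ≠ ⊥)
    (hLip : ∀ x y : E, f x ≠ ⊤ → f y ≠ ⊤ → |(f x).toReal - (f y).toReal| ≤ ℓ * ‖x - y‖)
    (hφ : ∀ x, ℓ * ‖x‖ ≤ φ x) {u : E} (hu : f u ≠ ⊤) : infConv f φ u = f u :=
  le_antisymm (by simpa [hφ0] using infConv_le (f := f) (φ := φ) u u)
    (le_iInf (le_add_of_lipschitzOn_dom hfbot hLip hφ hu))

theorem le_add_of_eq_infConv_of_ne_top (hg : ∀ x, (g x : EReal) = infConv f φ x)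
    (hfg : ∀ w, f w ≠ ⊤ → f w = g w) {w : E} (hw : f w ≠ ⊤) (x : E) :
    g x ≤ g w + φ (w - x) := by
  have := (hg x).trans_le (infConv_le x w)
  rw [hfg w hw] at this
  exact_mod_cast this

theorem exists_add_lt_of_eq_infConv (hg : ∀ x, (g x : EReal) = infConv f φ x)
    (hfg : ∀ w, f w ≠ ⊤ → f w = g w) (x : E) {ρ : ℝ} (hρ : 0 < ρ) :
    ∃ w, f w ≠ ⊤ ∧ g w + φ (w - x) < g x + ρ := by
  have : infConv f φ x < ((g x + ρ : ℝ) : EReal) := by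
    rw [← hg x]
    exact_mod_cast lt_add_of_pos_right _ hρ
  obtain ⟨w, hw⟩ := iInf_lt_iff.1 this
  have hw_top : f w ≠ ⊤ := by
    rintro hw_top
    rw [hw_top, EReal.top_add_coe] at hw
    exact not_top_lt hw
  rw [hfg w hw_top] at hw
  exact ⟨w, hw_top, by exact_mod_cast hw⟩

theorem le_add_of_eq_infConv (hg : ∀ x, (g x : EReal) = infConv f φ x)
    (hfg : ∀ w, f w ≠ ⊤ → f w = g w) (hsub : ∀ x y : E, φ (x + y) ≤ φ x + φ y) (a b : E) :
    g a ≤ g b + φ (b - a) := by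
  refine le_of_forall_pos_lt_add fun ρ hρ => ?_
  obtain ⟨w, hw, hwb⟩ := exists_add_lt_of_eq_infConv hg hfg b hρ
  have hsub_wba := hsub (w - b) (b - a)
  rw [sub_add_sub_cancel] at hsub_wba
  linarith [le_add_of_eq_infConv_of_ne_top hg hfg hw a]

end InfConv

theorem exists_frechetSubdiff_near_of_eq_infConv [CompleteSpace X] {f : X → EReal}
    {φ g : X → ℝ} (hg : ∀ x, (g x : EReal) = infConv f φ x) (hfg : ∀ w, f w ≠ ⊤ → f w = g w)
    (hdom : IsClosed {w | f w ≠ ⊤}) (hgc : Continuous g) (hφc : Continuous φ)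
    {q : X →L[ℝ] ℝ} {ε : ℝ} {x : X} (hq : q ∈ frechetSubdiff g ε x) (hε : 0 ≤ ε)
    {δ : ℝ} (hδ : 0 < δ) :
    ∃ u v z, f u ≠ ⊤ ∧ g u + φ (u - x) ≤ g x + δ * δ ∧ f v ≠ ⊤ ∧ ‖v - u‖ ≤ δ ∧
      ‖z - (u - x)‖ ≤ δ ∧
      q ∈ frechetSubdiffE f (ε + 2 * δ) v ∧ -q ∈ frechetSubdiff φ (ε + 2 * δ) z := by
  obtain ⟨r, hr, hqr⟩ := Metric.eventually_nhds_iff.1 (hq δ hδ)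
  have hq_near : ∀ a : X, ‖a‖ ≤ r / 2 → q a ≤ g (x + a) - g x + (ε + δ) * ‖a‖ := fun a ha => by
    simpa using hqr (y := x + a) (by rw [dist_eq_norm, add_sub_cancel_left]; linarith)
  -- `ρ ≤ δ²` keeps the Ekeland points within `δ` of `u` and `u - x`, and `ρ < δ r / 2` keeps
  -- the perturbations inside the ball where `hq_near` applies.
  set ρ := δ * min δ (r / 4)
  have hρ : 0 < ρ := mul_pos hδ (lt_min hδ (by linarith))
  have hρδ : ρ ≤ δ * δ := mul_le_mul_of_nonneg_left (min_le_left _ _) hδ.le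
  have hρr : ρ < δ * (r / 2) :=
    mul_lt_mul_of_pos_left ((min_le_right _ _).trans_lt (by linarith)) hδ
  obtain ⟨u, hu, hux⟩ := exists_add_lt_of_eq_infConv hg hfg x hρ
  obtain ⟨v, hv, hvu, hvq⟩ := hdom.exists_eventually_le_of_le_add hgc.lowerSemicontinuous q hu
    (add_nonneg hε hδ.le) hδ hρ.le hρr fun y hy hyu => by
      have hgy := le_add_of_eq_infConv_of_ne_top hg hfg hy (x + (y - u))
      rw [show y - (x + (y - u)) = u - x by abel] at hgy
      linarith [hq_near (y - u) hyu]
  obtain ⟨z, -, hzu, hzq⟩ := isClosed_univ.exists_eventually_le_of_le_add hφc.lowerSemicontinuous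
    (-q) (mem_univ (u - x)) (add_nonneg hε hδ.le) hδ hρ.le hρr fun z _ hz => by
      have hgu := le_add_of_eq_infConv_of_ne_top hg hfg hu (x + (u - x - z))
      rw [show u - (x + (u - x - z)) = z by abel] at hgu
      have hqz := hq_near (u - x - z) (by rwa [norm_sub_rev])
      rw [norm_sub_rev, map_sub] at hqz
      rw [neg_apply, map_sub]
      linarith
  refine ⟨u, v, z, hu, by linarith, hv, le_of_mul_le_mul_left (hvu.trans hρδ) hδ,
    le_of_mul_le_mul_left (hzu.trans hρδ) hδ, mem_frechetSubdiffE_of_eventually_le hfg hv ?_,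
    mem_frechetSubdiff_of_eventually_le ?_⟩
  · filter_upwards [hvq] with w hw hwf
    linarith [hw hwf]
  · filter_upwards [hzq] with w hw
    linarith [hw (mem_univ w)]

theorem tendsto_norm_sub_of_approx_min {E : Type*} [NormedAddCommGroup E] {g φ : E → ℝ}
    {m ℓ : ℝ} (hℓ : 0 ≤ ℓ) (hlm : ℓ < m) (hcoer : ∀ x : E, m * ‖x‖ ≤ φ x) {x0 : E}
    {x u : ℕ → E} {ρ : ℕ → ℝ}
    (hx : Tendsto x atTop (𝓝 x0)) (hgx : Tendsto (fun k => g (x k)) atTop (𝓝 (g x0)))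
    (hρ : Tendsto ρ atTop (𝓝 0)) (hlow : ∀ k, g x0 - ℓ * ‖u k - x0‖ ≤ g (u k))
    (hu : ∀ k, g (u k) + φ (u k - x k) ≤ g (x k) + ρ k) :
    Tendsto (fun k => ‖u k - x k‖) atTop (𝓝 0) := by
  have hxn : Tendsto (fun k => ‖x k - x0‖) atTop (𝓝 0) := tendsto_iff_norm_sub_tendsto_zero.1 hx
  have hbound : Tendsto (fun k => (g (x k) - g x0 + ρ k + ℓ * ‖x k - x0‖) / (m - ℓ)) atTop
      (𝓝 0) := by
    simpa using (((hgx.sub_const (g x0)).add hρ).add (hxn.const_mul ℓ)).div_const (m - ℓ)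
  refine squeeze_zero (fun k => norm_nonneg _) (fun k => ?_) hbound
  rw [le_div_iff₀ (sub_pos.2 hlm)]
  have htri := norm_sub_le_norm_sub_add_norm_sub (u k) (x k) x0
  nlinarith [hcoer (u k - x k), hlow k, hu k, mul_le_mul_of_nonneg_left htri hℓ]

theorem limitingSubdiff_subset_of_eq_infConv [CompleteSpace X] {f : X → EReal} {φ g : X → ℝ}
    (hg : ∀ x, (g x : EReal) = infConv f φ x) (hfg : ∀ w, f w ≠ ⊤ → f w = g w)
    (hflsc : LowerSemicontinuous f) (hgc : Continuous g) (hφc : Continuous φ) {m ℓ : ℝ}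
    (hℓ : 0 ≤ ℓ) (hlm : ℓ < m) (hcoer : ∀ x : X, m * ‖x‖ ≤ φ x) {x0 : X} (hx0 : f x0 = g x0)
    (hlow : ∀ u, f u ≠ ⊤ → g x0 - ℓ * ‖u - x0‖ ≤ g u) :
    limitingSubdiff g x0 ⊆
      limitingSubdiffE f x0 ∩ {p : X →L[ℝ] ℝ | -p ∈ limitingSubdiff φ (0 : X)} := by
  rintro p ⟨x, ε, q, hε0, hε, hx, hgx, hq, hqp⟩
  have hδ : Tendsto (fun k : ℕ => 1 / ((k : ℝ) + 1)) atTop (𝓝 0) :=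
    tendsto_one_div_add_atTop_nhds_zero_nat
  choose u v z hu hux hv_dom hvu hzu hvq hzq using fun k => exists_frechetSubdiff_near_of_eq_infConv
    hg hfg (hflsc.isClosed_setOf_ne_top hgc hfg) hgc hφc (hq k) (hε0 k) Nat.one_div_pos_of_nat
  have hux0 := tendsto_norm_sub_of_approx_min hℓ hlm hcoer hx hgx (by simpa using hδ.mul hδ)
    (fun k => hlow _ (hu k)) hux
  have hv : Tendsto v atTop (𝓝 x0) := by
    refine tendsto_iff_norm_sub_tendsto_zero.2 (squeeze_zero (fun k => norm_nonneg _) (fun k => ?_)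
      (by simpa only [add_zero] using (hδ.add hux0).add (tendsto_iff_norm_sub_tendsto_zero.1 hx)))
    linarith [hvu k, norm_sub_le_norm_sub_add_norm_sub (v k) (u k) x0,
      norm_sub_le_norm_sub_add_norm_sub (u k) (x k) x0]
  have hz : Tendsto z atTop (𝓝 0) := by
    refine tendsto_zero_iff_norm_tendsto_zero.2 (squeeze_zero (fun k => norm_nonneg _) (fun k => ?_)
      (by simpa only [add_zero] using hδ.add hux0))
    linarith [hzu k, norm_le_norm_sub_add (z k) (u k - x k)]
  have hε' : Tendsto (fun k => ε k + 2 * (1 / ((k : ℝ) + 1))) atTop (𝓝 0) := by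
    simpa using hε.add (hδ.const_mul 2)
  have hε'0 : ∀ k, 0 ≤ ε k + 2 * (1 / ((k : ℝ) + 1)) := fun k => by positivity [hε0 k]
  refine ⟨⟨v, _, q, hε'0, hε', hv, ?_, hvq, hqp⟩,
    z, _, -q, hε'0, hε', hz, (hφc.tendsto 0).comp hz, hzq, fun w => by simpa using (hqp w).neg⟩
  rw [hx0]
  exact ((continuous_coe_real_ereal.tendsto _).comp ((hgc.tendsto x0).comp hv)).congr
    fun k => (hfg _ (hv_dom k)).symm

theorem stmt_12_general [CompleteSpace X] (f : X → EReal) (φ : X → ℝ) (g : X → ℝ)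
    (hfbot : ∀ x, f x ≠ ⊥) (hflsc : LowerSemicontinuous f)
    (hφ0 : φ 0 = 0) (hφcont : ContinuousAt φ 0)
    (hsub : ∀ x y : X, φ (x + y) ≤ φ x + φ y)
    (m ℓ : ℝ) (hℓ : 0 ≤ ℓ) (hlm : ℓ < m)
    (hcoer : ∀ x : X, m * ‖x‖ ≤ φ x)
    (hLip : ∀ x y : X, f x ≠ ⊤ → f y ≠ ⊤ → |(f x).toReal - (f y).toReal| ≤ ℓ * ‖x - y‖)
    (hg : ∀ x, (g x : EReal) = infConv f φ x)
    (x0 : X) (hx0 : (g x0 : EReal) = f x0) :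
    limitingSubdiff g x0 ⊆
      limitingSubdiffE f x0 ∩ {p : X →L[ℝ] ℝ | -p ∈ limitingSubdiff φ (0 : X)} := by
  have hφ : Tendsto φ (𝓝 0) (𝓝 0) := hφ0 ▸ hφcont.tendsto
  have hφc : Continuous φ := continuous_of_le_add_sub hφ fun a b => by
    simpa [add_comm] using hsub (a - b) b
  have hfg : ∀ u, f u ≠ ⊤ → f u = g u := fun u hu =>
    ((hg u).trans (infConv_eq_self_of_lipschitzOn_dom hφ0 hfbot hLip
      (fun x => (mul_le_mul_of_nonneg_right hlm.le (norm_nonneg x)).trans (hcoer x)) hu)).symm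
  have hgc : Continuous g := continuous_of_le_add_sub (ω := fun z => φ (-z))
    (hφ.comp (by simpa using tendsto_neg (0 : X))) fun a b => by
      simpa using le_add_of_eq_infConv hg hfg hsub a b
  refine limitingSubdiff_subset_of_eq_infConv hg hfg hflsc hgc hφc hℓ hlm hcoer hx0.symm
    fun u hu => ?_
  have hLu := hLip u x0 hu (hx0 ▸ EReal.coe_ne_top _)
  rw [hfg u hu, ← hx0, EReal.toReal_coe, EReal.toReal_coe] at hLu
  linarith [(abs_le.1 hLu).1]

/-- limiting subdifferential upper estimate at points of `S₀`. -/
theorem stmt_12 [CompleteSpace X] (f : X → EReal) (φ : X → ℝ) (g : X → ℝ)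
    (hfbot : ∀ x, f x ≠ ⊥) (hflsc : LowerSemicontinuous f)
    (hφpos : ∀ x, 0 ≤ φ x) (hφ0 : φ 0 = 0) (hφcont : ContinuousAt φ 0)
    (hsub : ∀ x y : X, φ (x + y) ≤ φ x + φ y)
    (m ℓ : ℝ) (hm : 0 < m) (hℓ : 0 ≤ ℓ) (hlm : ℓ < m)
    (hcoer : ∀ x : X, m * ‖x‖ ≤ φ x)
    (hLip : ∀ x y : X, f x ≠ ⊤ → f y ≠ ⊤ → |(f x).toReal - (f y).toReal| ≤ ℓ * ‖x - y‖)
    (hg : ∀ x, (g x : EReal) = infConv f φ x)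
    (x0 : X) (hx0 : (g x0 : EReal) = f x0) :
    limitingSubdiff g x0 ⊆
      limitingSubdiffE f x0 ∩ {p : X →L[ℝ] ℝ | -p ∈ limitingSubdiff φ (0 : X)} :=
  stmt_12_general f φ g hfbot hflsc hφ0 hφcont hsub m ℓ hℓ hlm hcoer hLip hg x0 hx0
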